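/- arXiv:2007.08318 — 8 statements merged into one kernel-verified Lean document; each statement's English description precedes it below -/
import Mathlib

section
/- Suppose (x°, w) is an equilibrium of the single-type resource allocation game (with mass d > 0, rewards c, times t, resource matrix A, capacities b, balance matrix H) and assume c^T x° > 0. Then x° maximizes the potential d·log(c^T x) − t^T x over x ≥ 0 satisfying A x ≤ b, H x = 0, and c^T x > 0. -/
open Matrix

/-!
The equilibrium condition says that `x°` maximises `cᵀz` on the slice `(t + w)ᵀz = d` of the
cone `{z ≥ 0, Hz = 0}`; by homogeneity this gives `d · cᵀy ≤ ((t + w)ᵀy) · cᵀx°` for every `y`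
in the cone. Taking logarithms and using `log r ≤ r - 1` bounds `d log cᵀy - d log cᵀx°` by
`(t + w)ᵀy - (t + w)ᵀx°`, and since `w = Aᵀδ` with `δ` complementary to the slack of `A x° ≤ b`,
every `y` with `A y ≤ b` has `wᵀy ≤ δᵀb = wᵀx°`. What is left is `tᵀy - tᵀx°`.
-/

theorem PointedCone.mul_apply_le_of_isMaxOn_slice {𝕜 E : Type*} [Field 𝕜] [LinearOrder 𝕜]
    [IsStrictOrderedRing 𝕜] [AddCommGroup E] [Module 𝕜 E]
    {C : PointedCone 𝕜 E} {f g : E →ₗ[𝕜] 𝕜} {d : 𝕜} {x y : E} (hd : 0 < d)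
    (hx : x ∈ C) (hgx : g x = d) (hmax : IsMaxOn f ((C : Set E) ∩ g ⁻¹' {d}) x)
    (hy : y ∈ C) : d * f y ≤ g y * f x := by
  rcases lt_or_ge 0 (g y) with hgy | hgy
  · have hz : (d / g y) • y ∈ (C : Set E) ∩ g ⁻¹' {d} :=
      ⟨C.smul_mem (by positivity) hy, by simp [hgy.ne']⟩
    have hle : d / g y * f y ≤ f x := by simpa using hmax hz
    rwa [div_mul_eq_mul_div, div_le_iff₀ hgy, mul_comm (f x)] at hle
  · -- `x` is scaled up by exactly the mass that `y` removes.
    have hcoef : 0 ≤ 1 - g y / d :=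
      sub_nonneg.2 ((div_nonpos_of_nonpos_of_nonneg hgy hd.le).trans zero_le_one)
    have hz : (1 - g y / d) • x + y ∈ (C : Set E) ∩ g ⁻¹' {d} :=
      ⟨C.add_mem (C.smul_mem hcoef hx) hy, by simp [hgx, sub_mul, hd.ne']⟩
    have hle : f y ≤ g y / d * f x := by
      have : f ((1 - g y / d) • x + y) ≤ f x := hmax hz
      rw [map_add, map_smul, smul_eq_mul] at this
      linarith
    calc d * f y ≤ d * (g y / d * f x) := mul_le_mul_of_nonneg_left hle hd.le
      _ = g y * f x := by field_simp

theorem Matrix.transpose_mulVec_dotProduct_le {m n R : Type*} [Fintype m] [Fintype n]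
    [CommRing R] [PartialOrder R] [IsOrderedRing R]
    {A : Matrix m n R} {b δ : m → R} {x y : n → R} (hδ : 0 ≤ δ) (hAx : A *ᵥ x ≤ b)
    (hslack : ∀ i, (A *ᵥ x) i < b i → δ i = 0) (hAy : A *ᵥ y ≤ b) :
    (Aᵀ *ᵥ δ) ⬝ᵥ y ≤ (Aᵀ *ᵥ δ) ⬝ᵥ x := by
  have htight : δ ⬝ᵥ (A *ᵥ x) = δ ⬝ᵥ b := by
    refine Finset.sum_congr rfl fun i _ => ?_
    rcases (hAx i).lt_or_eq with h | h
    · simp [hslack i h]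
    · rw [h]
  rw [mulVec_transpose, ← dotProduct_mulVec, ← dotProduct_mulVec, htight]
  exact dotProduct_le_dotProduct_of_nonneg_left hAy hδ

theorem Real.mul_log_le_of_mul_le_mul {d u v s : ℝ} (hd : 0 < d) (hu : 0 < u) (hv : 0 < v)
    (h : d * u ≤ s * v) : d * Real.log u ≤ d * Real.log v + (s - d) := by
  have hlog : Real.log (u / v) ≤ u / v - 1 := Real.log_le_sub_one_of_pos (by positivity)
  have hratio : d * (u / v) ≤ s := by rwa [mul_div_assoc', div_le_iff₀ hv]
  rw [Real.log_div hu.ne' hv.ne'] at hlog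
  nlinarith

theorem equilibrium_maximizes_potential_general
    {J I K : ℕ}
    (c t : Fin J → ℝ) (A : Matrix (Fin I) (Fin J) ℝ) (b : Fin I → ℝ)
    (H : Matrix (Fin K) (Fin J) ℝ) (d : ℝ)
    (hd : 0 < d)
    (x w : Fin J → ℝ)
    (hx : ∀ j, 0 ≤ x j)
    (hHx : H.mulVec x = 0)
    (hmassx : ∑ j, (t j + w j) * x j = d)
    (hmax : ∀ y : Fin J → ℝ, (∀ j, 0 ≤ y j) → H.mulVec y = 0 →
      ∑ j, (t j + w j) * y j = d → ∑ j, c j * y j ≤ ∑ j, c j * x j)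
    (hAx : ∀ i, A.mulVec x i ≤ b i)
    (hwδ : ∃ δ : Fin I → ℝ, (∀ i, 0 ≤ δ i) ∧ (∀ i, A.mulVec x i < b i → δ i = 0) ∧
      w = Aᵀ.mulVec δ)
    (hcx : 0 < ∑ j, c j * x j) :
    ∀ y : Fin J → ℝ, (∀ j, 0 ≤ y j) → (∀ i, A.mulVec y i ≤ b i) → H.mulVec y = 0 →
      0 < ∑ j, c j * y j →
      d * Real.log (∑ j, c j * y j) - ∑ j, t j * y j ≤
        d * Real.log (∑ j, c j * x j) - ∑ j, t j * x j := by
  intro y hy hAy hHy hcy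
  obtain ⟨δ, hδ, hslack, rfl⟩ := hwδ
  let C : PointedCone ℝ (Fin J → ℝ) := .positive ℝ _ ⊓ .ofSubmodule (LinearMap.ker H.mulVecLin)
  have hhom : d * (c ⬝ᵥ y) ≤ ((t + Aᵀ *ᵥ δ) ⬝ᵥ y) * (c ⬝ᵥ x) :=
    PointedCone.mul_apply_le_of_isMaxOn_slice (C := C) (f := dotProductBilin ℝ ℝ c)
      (g := dotProductBilin ℝ ℝ (t + Aᵀ *ᵥ δ)) hd ⟨hx, hHx⟩ hmassx
      (fun z ⟨⟨hz, hHz⟩, hmz⟩ => hmax z hz hHz hmz) ⟨hy, hHy⟩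
  have hlog : d * Real.log (c ⬝ᵥ y) ≤ d * Real.log (c ⬝ᵥ x) + ((t + Aᵀ *ᵥ δ) ⬝ᵥ y - d) :=
    Real.mul_log_le_of_mul_le_mul hd hcy hcx hhom
  have hwy := transpose_mulVec_dotProduct_le hδ hAx hslack hAy
  change (t + Aᵀ *ᵥ δ) ⬝ᵥ x = d at hmassx
  rw [add_dotProduct] at hmassx hlog
  change d * Real.log (c ⬝ᵥ y) - t ⬝ᵥ y ≤ d * Real.log (c ⬝ᵥ x) - t ⬝ᵥ x
  linarith

/-- If `(x°, w)` is an equilibrium of the single-type resource allocation game with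
positive reward, then `x°` maximizes the potential `d·log(cᵀx) − tᵀx` over the
feasible set `{x ≥ 0 : A x ≤ b, H x = 0, cᵀx > 0}`. -/
theorem equilibrium_maximizes_potential
    {J I K : ℕ}
    (c t : Fin J → ℝ) (A : Matrix (Fin I) (Fin J) ℝ) (b : Fin I → ℝ)
    (H : Matrix (Fin K) (Fin J) ℝ) (d : ℝ)
    (hd : 0 < d) (ht : ∀ j, 0 ≤ t j) (hA : ∀ i j, 0 ≤ A i j) (hb : ∀ i, 0 < b i)
    (x w : Fin J → ℝ)
    (hx : ∀ j, 0 ≤ x j)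
    (hHx : H.mulVec x = 0)
    (hmassx : ∑ j, (t j + w j) * x j = d)
    (hmax : ∀ y : Fin J → ℝ, (∀ j, 0 ≤ y j) → H.mulVec y = 0 →
      ∑ j, (t j + w j) * y j = d → ∑ j, c j * y j ≤ ∑ j, c j * x j)
    (hAx : ∀ i, A.mulVec x i ≤ b i)
    (hwδ : ∃ δ : Fin I → ℝ, (∀ i, 0 ≤ δ i) ∧ (∀ i, A.mulVec x i < b i → δ i = 0) ∧
      w = Aᵀ.mulVec δ)
    (hcx : 0 < ∑ j, c j * x j) :
    ∀ y : Fin J → ℝ, (∀ j, 0 ≤ y j) → (∀ i, A.mulVec y i ≤ b i) → H.mulVec y = 0 →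
      0 < ∑ j, c j * y j →
      d * Real.log (∑ j, c j * y j) - ∑ j, t j * y j ≤
        d * Real.log (∑ j, c j * x j) - ∑ j, t j * x j :=
  equilibrium_maximizes_potential_general c t A b H d hd x w hx hHx hmassx hmax hAx hwδ hcx
end

section
/- Conversely, suppose x° maximizes d·log(c^T x) − t^T x over x ≥ 0 with A x ≤ b, H x = 0 (assuming the maximum exists with c^T x° > 0), and let λ ∈ ℝ^I_{≥0} be Lagrange multipliers for the constraint A x ≤ b satisfying the KKT conditions (complementary slackness λ_i·((A x°)_i − b_i) = 0 and stationarity d·c_j/(c^T x°) − t_j − (A^T λ)_j − (H^T μ)_j ≤ 0 with equality when x°_j > 0, for some μ ∈ ℝ^K). Then (x°, A^T λ) is an equilibrium of the game. -/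
/-
With `S = cᵀx°` and prices `q = t + Aᵀλ + Hᵀμ`, stationarity says `(d / S) • c ≤ q` with equality
on the support of `x°`. Hence `x°` maximizes the linear form `(d / S) • c` over the `y ≥ 0` with
`qᵀy = qᵀx°`, and there this form is worth `d`. On `ker H` the term `Hᵀμ` contributes nothing, so
`qᵀy` is the cost `(t + Aᵀλ)ᵀy`: the budget holds at `x°`, and every affordable `y` has
`cᵀy ≤ cᵀx°`. Complementary slackness makes `δ = λ` an admissible multiplier.
-/

open Matrix

section

variable {ι κ R : Type*} [Fintype ι]

lemma dotProduct_eq_of_eq_of_pos [Semiring R] [PartialOrder R] {p q x : ι → R} (hx : 0 ≤ x)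
    (hpq : ∀ j, 0 < x j → p j = q j) : p ⬝ᵥ x = q ⬝ᵥ x :=
  Finset.sum_congr rfl fun j _ => by
    rcases (hx j).lt_or_eq with hj | hj
    · rw [hpq j hj]
    · simp [← hj]

lemma dotProduct_le_of_le_of_eq_of_pos [Semiring R] [PartialOrder R] [IsOrderedRing R]
    {p q x y : ι → R} (hpq : p ≤ q) (hx_supp : ∀ j, 0 < x j → p j = q j) (hx : 0 ≤ x)
    (hy : 0 ≤ y) (hqy : q ⬝ᵥ y = q ⬝ᵥ x) : p ⬝ᵥ y ≤ p ⬝ᵥ x :=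
  calc p ⬝ᵥ y ≤ q ⬝ᵥ y := dotProduct_le_dotProduct_of_nonneg_right hpq hy
    _ = q ⬝ᵥ x := hqy
    _ = p ⬝ᵥ x := (dotProduct_eq_of_eq_of_pos hx hx_supp).symm

lemma transpose_mulVec_dotProduct_eq_zero [Fintype κ] [CommSemiring R] (H : Matrix κ ι R)
    (μ : κ → R) {y : ι → R} (hy : H *ᵥ y = 0) : Hᵀ *ᵥ μ ⬝ᵥ y = 0 := by
  rw [mulVec_transpose, ← dotProduct_mulVec, hy, dotProduct_zero]

end

theorem potential_maximizer_is_equilibrium_general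
    {J I K : ℕ}
    (c t : Fin J → ℝ) (A : Matrix (Fin I) (Fin J) ℝ) (b : Fin I → ℝ)
    (H : Matrix (Fin K) (Fin J) ℝ) (d : ℝ)
    (hd : 0 < d)
    (x : Fin J → ℝ) (lam : Fin I → ℝ) (mu : Fin K → ℝ)
    (hx : ∀ j, 0 ≤ x j)
    (hAx : ∀ i, A.mulVec x i ≤ b i)
    (hHx : H.mulVec x = 0)
    (hcx : 0 < ∑ j, c j * x j)
    (hlam : ∀ i, 0 ≤ lam i)
    (hcs : ∀ i, lam i * (A.mulVec x i - b i) = 0)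
    (hstat : ∀ j, d * c j / (∑ j', c j' * x j') - t j - Aᵀ.mulVec lam j
      - Hᵀ.mulVec mu j ≤ 0)
    (hstat_eq : ∀ j, 0 < x j →
      d * c j / (∑ j', c j' * x j') - t j - Aᵀ.mulVec lam j - Hᵀ.mulVec mu j = 0) :
    -- (x, w) with w = Aᵀλ is an equilibrium:
    (∑ j, (t j + Aᵀ.mulVec lam j) * x j = d) ∧
    (∀ y : Fin J → ℝ, (∀ j, 0 ≤ y j) → H.mulVec y = 0 →
      ∑ j, (t j + Aᵀ.mulVec lam j) * y j = d → ∑ j, c j * y j ≤ ∑ j, c j * x j) ∧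
    (∀ i, A.mulVec x i ≤ b i) ∧
    (∃ δ : Fin I → ℝ, (∀ i, 0 ≤ δ i) ∧ (∀ i, A.mulVec x i < b i → δ i = 0) ∧
      Aᵀ.mulVec lam = Aᵀ.mulVec δ) := by
  set S := ∑ j, c j * x j
  set w := t + Aᵀ *ᵥ lam
  set q := w + Hᵀ *ᵥ mu
  have hpq : (d / S) • c ≤ q := fun j => by
    have := hstat j
    rw [mul_div_right_comm] at this
    simp only [Pi.smul_apply, smul_eq_mul, q, w, Pi.add_apply]
    linarith
  have hsupp : ∀ j, 0 < x j → ((d / S) • c) j = q j := fun j hj => by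
    have := hstat_eq j hj
    rw [mul_div_right_comm] at this
    simp only [Pi.smul_apply, smul_eq_mul, q, w, Pi.add_apply]
    linarith
  have hqw : ∀ y, H *ᵥ y = 0 → q ⬝ᵥ y = w ⬝ᵥ y := fun y hy => by
    rw [add_dotProduct, transpose_mulVec_dotProduct_eq_zero H mu hy, add_zero]
  have hbudget : w ⬝ᵥ x = d := by
    rw [← hqw x hHx, ← dotProduct_eq_of_eq_of_pos hx hsupp, smul_dotProduct, smul_eq_mul]
    exact div_mul_cancel₀ d hcx.ne'
  refine ⟨hbudget, fun y hy hHy hy_budget => ?_, hAx, lam, hlam, fun i hi => ?_, rfl⟩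
  · have hqy : q ⬝ᵥ y = q ⬝ᵥ x := by rw [hqw y hHy, hqw x hHx, hbudget]; exact hy_budget
    have := dotProduct_le_of_le_of_eq_of_pos hpq hsupp hx hy hqy
    rw [smul_dotProduct, smul_dotProduct] at this
    exact le_of_mul_le_mul_left this (div_pos hd hcx)
  · exact (mul_eq_zero.mp (hcs i)).resolve_right (sub_ne_zero.mpr hi.ne)

/-- Converse: if `x°` maximizes the potential `d·log(cᵀx) − tᵀx` over
`{x ≥ 0 : A x ≤ b, H x = 0}` with KKT multipliers `λ` (for `A x ≤ b`) and `μ`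
(for `H x = 0`), then `(x°, Aᵀλ)` is an equilibrium of the game. -/
theorem potential_maximizer_is_equilibrium
    {J I K : ℕ}
    (c t : Fin J → ℝ) (A : Matrix (Fin I) (Fin J) ℝ) (b : Fin I → ℝ)
    (H : Matrix (Fin K) (Fin J) ℝ) (d : ℝ)
    (hd : 0 < d) (ht : ∀ j, 0 ≤ t j) (hA : ∀ i j, 0 ≤ A i j) (hb : ∀ i, 0 < b i)
    (x : Fin J → ℝ) (lam : Fin I → ℝ) (mu : Fin K → ℝ)
    (hx : ∀ j, 0 ≤ x j)
    (hAx : ∀ i, A.mulVec x i ≤ b i)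
    (hHx : H.mulVec x = 0)
    (hcx : 0 < ∑ j, c j * x j)
    (hmaxpot : ∀ y : Fin J → ℝ, (∀ j, 0 ≤ y j) → (∀ i, A.mulVec y i ≤ b i) →
      H.mulVec y = 0 → 0 < ∑ j, c j * y j →
      d * Real.log (∑ j, c j * y j) - ∑ j, t j * y j ≤
        d * Real.log (∑ j, c j * x j) - ∑ j, t j * x j)
    (hlam : ∀ i, 0 ≤ lam i)
    (hcs : ∀ i, lam i * (A.mulVec x i - b i) = 0)
    (hstat : ∀ j, d * c j / (∑ j', c j' * x j') - t j - Aᵀ.mulVec lam j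
      - Hᵀ.mulVec mu j ≤ 0)
    (hstat_eq : ∀ j, 0 < x j →
      d * c j / (∑ j', c j' * x j') - t j - Aᵀ.mulVec lam j - Hᵀ.mulVec mu j = 0) :
    -- (x, w) with w = Aᵀλ is an equilibrium:
    (∑ j, (t j + Aᵀ.mulVec lam j) * x j = d) ∧
    (∀ y : Fin J → ℝ, (∀ j, 0 ≤ y j) → H.mulVec y = 0 →
      ∑ j, (t j + Aᵀ.mulVec lam j) * y j = d → ∑ j, c j * y j ≤ ∑ j, c j * x j) ∧
    (∀ i, A.mulVec x i ≤ b i) ∧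
    (∃ δ : Fin I → ℝ, (∀ i, 0 ≤ δ i) ∧ (∀ i, A.mulVec x i < b i → δ i = 0) ∧
      Aᵀ.mulVec lam = Aᵀ.mulVec δ) :=
  potential_maximizer_is_equilibrium_general c t A b H d hd x lam mu hx hAx hHx hcx hlam hcs hstat
    hstat_eq
end

section
/- If (x, w) and (y, v) are two equilibria of the multi-type resource allocation game such that the reward of every type is positive at both, then for each type l the attained reward rate c_l^T x_l equals c_l^T y_l, and the total active masses agree: Σ_l t_l^T x_l = Σ_l t_l^T y_l. -/
/-!
Let `r_l`, `s_l` be the rewards of type `l` at the two equilibria and `α_l`, `β_l` the cost of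
each equilibrium flow at the other equilibrium's prices. Comparing each optimum with the
rescaled other flow gives `d_l s_l ≤ r_l α_l` and `d_l r_l ≤ s_l β_l`, and complementary
slackness bounds `∑ α_l + ∑ β_l` by `2 ∑ d_l`. Since `s_l / r_l + r_l / s_l ≥ 2` with equality
only when `r_l = s_l`, all rewards agree; then `d_l ≤ α_l`, `d_l ≤ β_l`, and the same bounds
force the total active masses to agree.
-/

open Matrix

def IsMultiEquilibrium {L J I : ℕ} {K : Fin L → ℕ}
    (c t : Fin L → Fin J → ℝ) (A : Fin L → Matrix (Fin I) (Fin J) ℝ)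
    (H : (l : Fin L) → Matrix (Fin (K l)) (Fin J) ℝ)
    (b : Fin I → ℝ) (d : Fin L → ℝ)
    (x w : Fin L → Fin J → ℝ) : Prop :=
  (∀ l, (∀ j, 0 ≤ x l j) ∧ (H l).mulVec (x l) = 0 ∧
    (∑ j, (t l j + w l j) * x l j = d l) ∧
    (∀ y : Fin J → ℝ, (∀ j, 0 ≤ y j) → (H l).mulVec y = 0 →
      (∑ j, (t l j + w l j) * y j = d l) → ∑ j, c l j * y j ≤ ∑ j, c l j * x l j)) ∧
  (∀ i, ∑ l, (A l).mulVec (x l) i ≤ b i) ∧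
  (∃ δ : Fin I → ℝ, (∀ i, 0 ≤ δ i) ∧
    (∀ i, ∑ l, (A l).mulVec (x l) i < b i → δ i = 0) ∧
    (∀ l, w l = (A l)ᵀ.mulVec δ))

section FeasibleFlows

variable {ι κ : Type*} [Fintype ι]

/-- The strategy set of one type, with `p = t_l + w_l` and `d = d_l`. -/
def feasibleFlows (H : Matrix κ ι ℝ) (p : ι → ℝ) (d : ℝ) : Set (ι → ℝ) :=
  {y | 0 ≤ y ∧ H *ᵥ y = 0 ∧ p ⬝ᵥ y = d}

/-- Compare the optimum `x` with `x + z` when `p ⬝ᵥ z = 0`, and with `(d / p ⬝ᵥ z) • z`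
otherwise. -/
theorem mul_dotProduct_le_of_isMaxOn {H : Matrix κ ι ℝ} {c p x z : ι → ℝ} {d : ℝ} (hd : 0 ≤ d)
    (hx : x ∈ feasibleFlows H p d) (hmax : IsMaxOn (c ⬝ᵥ ·) (feasibleFlows H p d) x)
    (hz : 0 ≤ z) (hHz : H *ᵥ z = 0) (hpz : 0 ≤ p ⬝ᵥ z) :
    d * (c ⬝ᵥ z) ≤ (c ⬝ᵥ x) * (p ⬝ᵥ z) := by
  obtain ⟨hx0, hHx, hpx⟩ := hx
  rcases hpz.eq_or_lt with hpz | hpz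
  · have hxz : x + z ∈ feasibleFlows H p d :=
      ⟨add_nonneg hx0 hz, by rw [mulVec_add, hHx, hHz, add_zero],
        by rw [dotProduct_add, hpx, ← hpz, add_zero]⟩
    have hcz : c ⬝ᵥ z ≤ 0 := by
      have := isMaxOn_iff.mp hmax _ hxz
      rw [dotProduct_add] at this
      linarith
    rw [← hpz, mul_zero]
    exact mul_nonpos_of_nonneg_of_nonpos hd hcz
  · set s := p ⬝ᵥ z
    have hsz : (d / s) • z ∈ feasibleFlows H p d :=
      ⟨smul_nonneg (div_nonneg hd hpz.le) hz, by rw [mulVec_smul, hHz, smul_zero],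
        by rw [dotProduct_smul, smul_eq_mul, div_mul_cancel₀ _ hpz.ne']⟩
    have hcz : d / s * (c ⬝ᵥ z) ≤ c ⬝ᵥ x := by
      simpa only [dotProduct_smul, smul_eq_mul] using isMaxOn_iff.mp hmax _ hsz
    calc d * (c ⬝ᵥ z) = d / s * (c ⬝ᵥ z) * s := by field_simp
      _ ≤ (c ⬝ᵥ x) * s := by gcongr

end FeasibleFlows

theorem sum_transpose_mulVec_dotProduct {τ ι κ : Type*} [Fintype τ] [Fintype ι] [Fintype κ]
    (A : τ → Matrix κ ι ℝ) (δ : κ → ℝ) (x : τ → ι → ℝ) :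
    ∑ l, (A l)ᵀ *ᵥ δ ⬝ᵥ x l = δ ⬝ᵥ ∑ l, A l *ᵥ x l := by
  simp only [mulVec_transpose, ← dotProduct_mulVec, dotProduct_sum]

namespace IsMultiEquilibrium

variable {L J I : ℕ} {K : Fin L → ℕ} {c t : Fin L → Fin J → ℝ}
  {A : Fin L → Matrix (Fin I) (Fin J) ℝ} {H : (l : Fin L) → Matrix (Fin (K l)) (Fin J) ℝ}
  {b : Fin I → ℝ} {d : Fin L → ℝ} {x w : Fin L → Fin J → ℝ}

theorem mem_feasibleFlows (h : IsMultiEquilibrium c t A H b d x w) (l : Fin L) :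
    x l ∈ feasibleFlows (H l) (t l + w l) (d l) :=
  ⟨(h.1 l).1, (h.1 l).2.1, (h.1 l).2.2.1⟩

theorem isMaxOn (h : IsMultiEquilibrium c t A H b d x w) (l : Fin L) :
    IsMaxOn (c l ⬝ᵥ ·) (feasibleFlows (H l) (t l + w l) (d l)) (x l) :=
  isMaxOn_iff.mpr fun y hy => (h.1 l).2.2.2 y hy.1 hy.2.1 hy.2.2

theorem load_le (h : IsMultiEquilibrium c t A H b d x w) : ∑ l, A l *ᵥ x l ≤ b := fun i => by
  simpa only [Finset.sum_apply] using h.2.1 i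

theorem price_nonneg (h : IsMultiEquilibrium c t A H b d x w) (hA : ∀ l i j, 0 ≤ A l i j)
    (l : Fin L) : 0 ≤ w l := by
  obtain ⟨δ, hδ, -, hw⟩ := h.2.2
  rw [hw l]
  exact fun j => dotProduct_nonneg_of_nonneg (fun i => hA l i j) hδ

/-- Complementary slackness makes `δ ⬝ᵥ b` the price revenue of the equilibrium load. -/
theorem sum_price_dotProduct_le (h : IsMultiEquilibrium c t A H b d x w)
    {y : Fin L → Fin J → ℝ} (hy : ∑ l, A l *ᵥ y l ≤ b) :
    ∑ l, w l ⬝ᵥ y l ≤ ∑ l, w l ⬝ᵥ x l := by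
  obtain ⟨δ, hδ, hslack, hw⟩ := h.2.2
  simp only [hw, sum_transpose_mulVec_dotProduct]
  calc δ ⬝ᵥ ∑ l, A l *ᵥ y l ≤ δ ⬝ᵥ b := dotProduct_le_dotProduct_of_nonneg_left hy hδ
    _ = δ ⬝ᵥ ∑ l, A l *ᵥ x l := Finset.sum_congr rfl fun i _ => by
      rcases (h.load_le i).lt_or_eq with hlt | heq
      · rw [hslack i (by simpa only [Finset.sum_apply] using hlt), zero_mul, zero_mul]
      · rw [heq]

theorem sum_dotProduct_le (h : IsMultiEquilibrium c t A H b d x w)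
    {y : Fin L → Fin J → ℝ} (hy : ∑ l, A l *ᵥ y l ≤ b) :
    ∑ l, (t l + w l) ⬝ᵥ y l ≤ ∑ l, t l ⬝ᵥ y l + ∑ l, d l - ∑ l, t l ⬝ᵥ x l := by
  have hmass : ∑ l, d l = ∑ l, t l ⬝ᵥ x l + ∑ l, w l ⬝ᵥ x l := by
    simp only [← fun l => (h.mem_feasibleFlows l).2.2, add_dotProduct, Finset.sum_add_distrib]
  simp only [add_dotProduct, Finset.sum_add_distrib]
  linarith [h.sum_price_dotProduct_le hy]

theorem mul_dotProduct_le (h : IsMultiEquilibrium c t A H b d x w) (ht : ∀ l j, 0 ≤ t l j)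
    (hA : ∀ l i j, 0 ≤ A l i j) (l : Fin L) {y : Fin J → ℝ} (hy : 0 ≤ y) (hHy : H l *ᵥ y = 0) :
    d l * (c l ⬝ᵥ y) ≤ (c l ⬝ᵥ x l) * ((t l + w l) ⬝ᵥ y) := by
  have hp : 0 ≤ t l + w l := add_nonneg (ht l) (h.price_nonneg hA l)
  have hd : 0 ≤ d l := (h.mem_feasibleFlows l).2.2 ▸ dotProduct_nonneg_of_nonneg hp (h.1 l).1
  exact mul_dotProduct_le_of_isMaxOn hd (h.mem_feasibleFlows l) (h.isMaxOn l) hy hHy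
    (dotProduct_nonneg_of_nonneg hp hy)

end IsMultiEquilibrium

/-- `∑ i, d i * (r i - s i) ^ 2 / (r i * s i) ≤ ∑ i, (α i + β i - 2 * d i) ≤ 0`. -/
theorem eq_and_eq_of_mul_le_mul_of_sum_le {ι : Type*} [Fintype ι] {d r s α β : ι → ℝ} {p q : ℝ}
    (hd : ∀ i, 0 < d i) (hr : ∀ i, 0 < r i) (hs : ∀ i, 0 < s i)
    (hα : ∀ i, d i * s i ≤ r i * α i) (hβ : ∀ i, d i * r i ≤ s i * β i)
    (hαsum : ∑ i, α i ≤ q + ∑ i, d i - p) (hβsum : ∑ i, β i ≤ p + ∑ i, d i - q) :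
    r = s ∧ p = q := by
  have hgap : ∀ i, d i * (r i - s i) ^ 2 / (r i * s i) ≤ α i + β i - 2 * d i := fun i => by
    have := hr i; have := hs i
    rw [div_le_iff₀ (by positivity)]
    nlinarith [mul_le_mul_of_nonneg_right (hα i) (hs i).le,
      mul_le_mul_of_nonneg_right (hβ i) (hr i).le]
  have hgap_nonneg : ∀ i ∈ Finset.univ, 0 ≤ d i * (r i - s i) ^ 2 / (r i * s i) := fun i _ => by
    have := hd i; have := hr i; have := hs i
    positivity
  have hsum : ∑ i, d i * (r i - s i) ^ 2 / (r i * s i) = 0 := by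
    refine le_antisymm ?_ (Finset.sum_nonneg hgap_nonneg)
    calc _ ≤ ∑ i, (α i + β i - 2 * d i) := Finset.sum_le_sum fun i _ => hgap i
      _ = ∑ i, α i + ∑ i, β i - 2 * ∑ i, d i := by
        rw [Finset.sum_sub_distrib, Finset.sum_add_distrib, Finset.mul_sum]
      _ ≤ 0 := by linarith
  have hrs : r = s := funext fun i => by
    have := (Finset.sum_eq_zero_iff_of_nonneg hgap_nonneg).mp hsum i (Finset.mem_univ i)
    simpa [(hd i).ne', (hr i).ne', (hs i).ne', sub_eq_zero] using this
  subst hrs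
  have hdα : ∑ i, d i ≤ ∑ i, α i := Finset.sum_le_sum fun i _ =>
    le_of_mul_le_mul_left (by linarith [hα i]) (hr i)
  have hdβ : ∑ i, d i ≤ ∑ i, β i := Finset.sum_le_sum fun i _ =>
    le_of_mul_le_mul_left (by linarith [hβ i]) (hr i)
  exact ⟨rfl, by linarith⟩

theorem equilibrium_rewards_unique_general {L J I : ℕ} {K : Fin L → ℕ}
    (c t : Fin L → Fin J → ℝ) (A : Fin L → Matrix (Fin I) (Fin J) ℝ)
    (H : (l : Fin L) → Matrix (Fin (K l)) (Fin J) ℝ)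
    (b : Fin I → ℝ) (d : Fin L → ℝ)
    (hd : ∀ l, 0 < d l) (ht : ∀ l j, 0 ≤ t l j) (hA : ∀ l i j, 0 ≤ A l i j)
    (x w y v : Fin L → Fin J → ℝ)
    (hx : IsMultiEquilibrium c t A H b d x w)
    (hy : IsMultiEquilibrium c t A H b d y v)
    (hcx : ∀ l, 0 < ∑ j, c l j * x l j)
    (hcy : ∀ l, 0 < ∑ j, c l j * y l j) :
    (∀ l, ∑ j, c l j * x l j = ∑ j, c l j * y l j) ∧
    (∑ l, ∑ j, t l j * x l j = ∑ l, ∑ j, t l j * y l j) := by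
  have key := eq_and_eq_of_mul_le_mul_of_sum_le (r := fun l => c l ⬝ᵥ x l)
    (s := fun l => c l ⬝ᵥ y l) (α := fun l => (t l + w l) ⬝ᵥ y l)
    (β := fun l => (t l + v l) ⬝ᵥ x l) (p := ∑ l, t l ⬝ᵥ x l) (q := ∑ l, t l ⬝ᵥ y l) hd hcx hcy
    (fun l => hx.mul_dotProduct_le ht hA l (hy.mem_feasibleFlows l).1 (hy.mem_feasibleFlows l).2.1)
    (fun l => hy.mul_dotProduct_le ht hA l (hx.mem_feasibleFlows l).1 (hx.mem_feasibleFlows l).2.1)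
    (hx.sum_dotProduct_le hy.load_le) (hy.sum_dotProduct_le hx.load_le)
  exact ⟨congrFun key.1, key.2⟩

/-- Any two equilibria of the multi-type game with positive rewards at both yield
the same reward rate for each type, and the same total active mass. -/
theorem equilibrium_rewards_unique {L J I : ℕ} {K : Fin L → ℕ}
    (c t : Fin L → Fin J → ℝ) (A : Fin L → Matrix (Fin I) (Fin J) ℝ)
    (H : (l : Fin L) → Matrix (Fin (K l)) (Fin J) ℝ)
    (b : Fin I → ℝ) (d : Fin L → ℝ)
    (hd : ∀ l, 0 < d l) (ht : ∀ l j, 0 ≤ t l j) (hA : ∀ l i j, 0 ≤ A l i j)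
    (hb : ∀ i, 0 < b i)
    (x w y v : Fin L → Fin J → ℝ)
    (hx : IsMultiEquilibrium c t A H b d x w)
    (hy : IsMultiEquilibrium c t A H b d y v)
    (hcx : ∀ l, 0 < ∑ j, c l j * x l j)
    (hcy : ∀ l, 0 < ∑ j, c l j * y l j) :
    (∀ l, ∑ j, c l j * x l j = ∑ j, c l j * y l j) ∧
    (∑ l, ∑ j, t l j * x l j = ∑ l, ∑ j, t l j * y l j) :=
  equilibrium_rewards_unique_general c t A H b d hd ht hA x w y v hx hy hcx hcy
end

section
/- In a single-type game with no balance constraints (H = 0), if (x°, w) is an equilibrium with c^T x° > 0, then for every activity j with x°_j > 0 the waiting delay satisfies c_j/(w_j + t_j) = (c^T x°)/d. -/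
/-!
`x°` maximizes `cᵀy` over `{y ≥ 0 | aᵀy = d}` with `a = t + w`. Comparing it with the
feasible points `(d / a_j) e_j` gives `c_j ≤ (cᵀx° / d) a_j` whenever `a_j > 0`, and since
`aᵀx° = d` both sides have the same `x°`-weighted sum, so equality holds wherever `x°_j > 0`.
-/

open Matrix

section LinearProgram

variable {ι 𝕜 : Type*} [Fintype ι] [Field 𝕜] [LinearOrder 𝕜] [IsStrictOrderedRing 𝕜]

theorem le_div_mul_of_isMaxOn [DecidableEq ι] {a c x : ι → 𝕜} {d : 𝕜} (hd : 0 < d)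
    (hmax : IsMaxOn (c ⬝ᵥ ·) {y | 0 ≤ y ∧ a ⬝ᵥ y = d} x) {j : ι} (hj : 0 < a j) :
    c j ≤ c ⬝ᵥ x / d * a j := by
  have hvertex : Pi.single j (d / a j) ∈ {y | 0 ≤ y ∧ a ⬝ᵥ y = d} :=
    ⟨Pi.single_nonneg.mpr (div_pos hd hj).le, by
      rw [dotProduct_single, mul_div_cancel₀ d hj.ne']⟩
  have hle : c ⬝ᵥ Pi.single j (d / a j) ≤ c ⬝ᵥ x := hmax hvertex
  rw [dotProduct_single] at hle
  rw [div_mul_eq_mul_div, le_div_iff₀ hd]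
  rwa [mul_div_assoc', div_le_iff₀ hj] at hle

theorem eq_of_le_of_dotProduct_eq {c e x : ι → 𝕜} (hx : 0 ≤ x)
    (hle : ∀ j, 0 < x j → c j ≤ e j) (hsum : c ⬝ᵥ x = e ⬝ᵥ x) {j : ι} (hj : 0 < x j) :
    c j = e j := by
  have hterm : ∀ k ∈ Finset.univ, 0 ≤ (e k - c k) * x k := fun k _ => by
    rcases (hx k).lt_or_eq with h | h
    · exact mul_nonneg (sub_nonneg.mpr (hle k h)) h.le
    · rw [← h, Pi.zero_apply, mul_zero]
  have hzero : ∑ k, (e k - c k) * x k = 0 := by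
    simp only [sub_mul, Finset.sum_sub_distrib]
    exact sub_eq_zero.mpr hsum.symm
  have hj0 := (Finset.sum_eq_zero_iff_of_nonneg hterm).mp hzero j (Finset.mem_univ j)
  exact (sub_eq_zero.mp ((mul_eq_zero.mp hj0).resolve_right hj.ne')).symm

theorem div_eq_dotProduct_div_of_isMaxOn {a c x : ι → 𝕜} {d : 𝕜} (hd : 0 < d)
    (hmax : IsMaxOn (c ⬝ᵥ ·) {y | 0 ≤ y ∧ a ⬝ᵥ y = d} x) (hx : 0 ≤ x) (hax : a ⬝ᵥ x = d)
    (ha : ∀ j, 0 < x j → 0 < a j) {j : ι} (hj : 0 < x j) :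
    c j / a j = c ⬝ᵥ x / d := by
  classical
  set r := c ⬝ᵥ x / d
  have hsum : c ⬝ᵥ x = (r • a) ⬝ᵥ x := by
    rw [smul_dotProduct, hax, smul_eq_mul, div_mul_cancel₀ _ hd.ne']
  have hcj : c j = r * a j :=
    eq_of_le_of_dotProduct_eq hx (fun k hk => le_div_mul_of_isMaxOn hd hmax (ha k hk)) hsum hj
  rw [hcj, mul_div_cancel_right₀ r (ha j hj).ne']

end LinearProgram

theorem equilibrium_delay_formula_general
    {J : ℕ}
    (c t : Fin J → ℝ) (d : ℝ)
    (hd : 0 < d)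
    (x w : Fin J → ℝ)
    (hx : ∀ j, 0 ≤ x j)
    (hmassx : ∑ j, (t j + w j) * x j = d)
    (hmax : ∀ y : Fin J → ℝ, (∀ j, 0 ≤ y j) →
      ∑ j, (t j + w j) * y j = d → ∑ j, c j * y j ≤ ∑ j, c j * x j)
    (htw : ∀ j, 0 < x j → 0 < t j + w j) :
    ∀ j, 0 < x j → c j / (w j + t j) = (∑ j', c j' * x j') / d := by
  intro j hj
  rw [add_comm (w j)]
  exact div_eq_dotProduct_div_of_isMaxOn (a := t + w) hd (fun y hy => hmax y hy.1 hy.2)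
    hx hmassx htw hj

/-- In a single-type game without balance constraints, the equilibrium waiting delay
satisfies `c_j/(w_j + t_j) = (cᵀx°)/d` on every activity used at equilibrium. -/
theorem equilibrium_delay_formula
    {J I : ℕ}
    (c t : Fin J → ℝ) (A : Matrix (Fin I) (Fin J) ℝ) (b : Fin I → ℝ) (d : ℝ)
    (hd : 0 < d) (ht : ∀ j, 0 ≤ t j) (hA : ∀ i j, 0 ≤ A i j) (hb : ∀ i, 0 < b i)
    (x w : Fin J → ℝ)
    (hx : ∀ j, 0 ≤ x j)
    (hmassx : ∑ j, (t j + w j) * x j = d)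
    (hmax : ∀ y : Fin J → ℝ, (∀ j, 0 ≤ y j) →
      ∑ j, (t j + w j) * y j = d → ∑ j, c j * y j ≤ ∑ j, c j * x j)
    (hAx : ∀ i, A.mulVec x i ≤ b i)
    (hwδ : ∃ δ : Fin I → ℝ, (∀ i, 0 ≤ δ i) ∧ (∀ i, A.mulVec x i < b i → δ i = 0) ∧
      w = Aᵀ.mulVec δ)
    (hcx : 0 < ∑ j, c j * x j)
    (htw : ∀ j, 0 < x j → 0 < t j + w j) :
    ∀ j, 0 < x j → c j / (w j + t j) = (∑ j', c j' * x j') / d :=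
  equilibrium_delay_formula_general c t d hd x w hx hmassx hmax htw
end

section
/- (Price of anarchy upper bound.) Single player type, mass d > 0. Let x* be optimal for the LP max{c^T x : A x ≤ b, H x = 0, t^T x = d, x ≥ 0} and let (x°, w) be an equilibrium with c^T x° > 0. Assume F is concave on (0, d], that d° := t^T x° ∈ (0, d], that c^T x° = F(d°), and that F(d°) = s·d for some supergradient s of F at d°. Then c^T x* ≤ (2 − d°/d)·c^T x° ≤ 2·c^T x°. -/
open Matrix

theorem le_two_sub_div_mul_of_le_add_mul_sub {a b s d d₀ : ℝ} (hd : 0 < d)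
    (hsuper : a ≤ b + s * (d - d₀)) (hs : b = s * d) :
    a ≤ (2 - d₀ / d) * b := by
  have hslope : s = b / d := by rw [hs, mul_div_cancel_right₀ s hd.ne']
  calc a ≤ b + b / d * (d - d₀) := hslope ▸ hsuper
    _ = (2 - d₀ / d) * b := by field_simp; ring

theorem price_of_anarchy_upper_bound_general
    {J : ℕ} (c : Fin J → ℝ) (d : ℝ) (hd : 0 < d)
    (F : ℝ → ℝ)
    (xstar xeq : Fin J → ℝ)
    (hopt : ∑ j, c j * xstar j = F d)
    (hceq : 0 < ∑ j, c j * xeq j)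
    (d₀ : ℝ)
    (hd₀mem : d₀ ∈ Set.Ioc (0:ℝ) d)
    (hval : ∑ j, c j * xeq j = F d₀)
    (s : ℝ)
    (hsuper : ∀ y ∈ Set.Ioc (0:ℝ) d, F y ≤ F d₀ + s * (y - d₀))
    (hs : F d₀ = s * d) :
    ∑ j, c j * xstar j ≤ (2 - d₀ / d) * ∑ j, c j * xeq j ∧
    (2 - d₀ / d) * ∑ j, c j * xeq j ≤ 2 * ∑ j, c j * xeq j := by
  refine ⟨?_, ?_⟩
  · rw [hopt, hval]
    exact le_two_sub_div_mul_of_le_add_mul_sub hd (hsuper d ⟨hd, le_rfl⟩) hs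
  · have hratio : 0 ≤ d₀ / d := div_nonneg hd₀mem.1.le hd.le
    exact mul_le_mul_of_nonneg_right (by linarith) hceq.le

/-- Price of anarchy upper bound: the optimal value is at most `(2 − d°/d)` times
(hence at most twice) the equilibrium value. -/
theorem price_of_anarchy_upper_bound
    {J : ℕ} (c t : Fin J → ℝ) (d : ℝ) (hd : 0 < d)
    (F : ℝ → ℝ)
    (hFconc : ConcaveOn ℝ (Set.Ioc (0:ℝ) d) F)
    (xstar xeq : Fin J → ℝ)
    (hopt : ∑ j, c j * xstar j = F d)
    (hceq : 0 < ∑ j, c j * xeq j)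
    (d₀ : ℝ) (hd₀ : d₀ = ∑ j, t j * xeq j)
    (hd₀mem : d₀ ∈ Set.Ioc (0:ℝ) d)
    (hval : ∑ j, c j * xeq j = F d₀)
    (s : ℝ)
    (hsuper : ∀ y ∈ Set.Ioc (0:ℝ) d, F y ≤ F d₀ + s * (y - d₀))
    (hs : F d₀ = s * d) :
    ∑ j, c j * xstar j ≤ (2 - d₀ / d) * ∑ j, c j * xeq j ∧
    (2 - d₀ / d) * ∑ j, c j * xeq j ≤ 2 * ∑ j, c j * xeq j :=
  price_of_anarchy_upper_bound_general c d hd F xstar xeq hopt hceq d₀ hd₀mem hval s hsuper hs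
end

section
/- Under the conditions of Corollary on optimal equilibria (single type, c^T x° = F'(d°)·d with F concave on (0, d], d° = t^T x°), the equilibrium value without pricing is at least the net value retained under optimal pricing: c^T x° ≥ c^T x* − λ*^T A x*, where λ* are optimal dual variables so that c^T x* − λ*^T b = F'(d)·d for a supergradient F'(d). -/
/-! By strong duality and complementary slackness the two sides are `s₀·d` and `s·d`.
Supergradients are antitone, which settles `d° < d`. When `d° = d`, the supergradient
inequality at `d` together with `F > 0` on `(0, d]` gives `s·(d - y) < F d` for every
`y ∈ (0, d]`, hence `s·d ≤ F d = s₀·d` in the limit `y → 0⁺`. -/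

open Filter Topology

theorem supergradient_antitone {S : Set ℝ} {f : ℝ → ℝ} {x₁ x₂ s₁ s₂ : ℝ}
    (hx₁ : x₁ ∈ S) (hx₂ : x₂ ∈ S)
    (h₁ : ∀ y ∈ S, f y ≤ f x₁ + s₁ * (y - x₁))
    (h₂ : ∀ y ∈ S, f y ≤ f x₂ + s₂ * (y - x₂)) (hlt : x₁ < x₂) :
    s₂ ≤ s₁ := by
  have := h₁ x₂ hx₂
  have := h₂ x₁ hx₁
  nlinarith

theorem mul_le_of_supergradient_of_pos {f : ℝ → ℝ} {d s : ℝ} (hd : 0 < d)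
    (hpos : ∀ y ∈ Set.Ioc (0 : ℝ) d, 0 < f y)
    (hsuper : ∀ y ∈ Set.Ioc (0 : ℝ) d, f y ≤ f d + s * (y - d)) :
    s * d ≤ f d := by
  have hlim : Tendsto (fun y => s * (d - y)) (𝓝[>] 0) (𝓝 (s * d)) := by
    have : Continuous fun y : ℝ => s * (d - y) := by fun_prop
    simpa using (this.tendsto 0).mono_left nhdsWithin_le_nhds
  refine le_of_tendsto hlim ?_
  filter_upwards [Ioc_mem_nhdsGT hd] with y hy
  linarith [hsuper y hy, hpos y hy]

theorem equilibrium_value_vs_net_value_general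
    {J I : ℕ} (c : Fin J → ℝ) (A : Matrix (Fin I) (Fin J) ℝ) (b : Fin I → ℝ)
    (d : ℝ) (hd : 0 < d)
    (F : ℝ → ℝ)
    (hFpos : ∀ d' ∈ Set.Ioc (0:ℝ) d, 0 < F d')
    (xeq xstar : Fin J → ℝ) (lam : Fin I → ℝ)
    (d₀ : ℝ) (hd₀mem : d₀ ∈ Set.Ioc (0:ℝ) d)
    (s₀ s : ℝ)
    -- s₀ is a supergradient of F at d° with  cᵀx° = F(d°) = s₀·d
    (hsuper₀ : ∀ y ∈ Set.Ioc (0:ℝ) d, F y ≤ F d₀ + s₀ * (y - d₀))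
    (hval₀ : ∑ j, c j * xeq j = F d₀)
    (hs₀ : F d₀ = s₀ * d)
    -- s is a supergradient of F at d, and strong duality: cᵀx* − λ*ᵀb = s·d
    (hsuper : ∀ y ∈ Set.Ioc (0:ℝ) d, F y ≤ F d + s * (y - d))
    (hdual : ∑ j, c j * xstar j - ∑ i, lam i * b i = s * d)
    -- complementary slackness: λ*ᵀ b = λ*ᵀ A x*
    (hcs : ∑ i, lam i * b i = ∑ i, lam i * A.mulVec xstar i) :
    ∑ j, c j * xeq j ≥ ∑ j, c j * xstar j - ∑ i, lam i * A.mulVec xstar i := by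
  have hnet : ∑ j, c j * xstar j - ∑ i, lam i * A.mulVec xstar i = s * d := hcs ▸ hdual
  rw [hnet, hval₀, hs₀]
  rcases hd₀mem.2.lt_or_eq with hlt | heq
  · exact mul_le_mul_of_nonneg_right
      (supergradient_antitone hd₀mem ⟨hd, le_rfl⟩ hsuper₀ hsuper hlt) hd.le
  · rw [← hs₀, heq]
    exact mul_le_of_supergradient_of_pos hd hFpos hsuper

/-- The equilibrium value without pricing is at least the net value retained by the
players under optimal pricing: `cᵀx° ≥ cᵀx* − λ*ᵀA x*`. -/
theorem equilibrium_value_vs_net_value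
    {J I : ℕ} (c t : Fin J → ℝ) (A : Matrix (Fin I) (Fin J) ℝ) (b : Fin I → ℝ)
    (d : ℝ) (hd : 0 < d)
    (F : ℝ → ℝ)
    (hFconc : ConcaveOn ℝ (Set.Ioc (0:ℝ) d) F)
    (hFpos : ∀ d' ∈ Set.Ioc (0:ℝ) d, 0 < F d')
    (xeq xstar : Fin J → ℝ) (lam : Fin I → ℝ)
    (d₀ : ℝ) (hd₀ : d₀ = ∑ j, t j * xeq j) (hd₀mem : d₀ ∈ Set.Ioc (0:ℝ) d)
    (s₀ s : ℝ)
    -- s₀ is a supergradient of F at d° with  cᵀx° = F(d°) = s₀·d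
    (hsuper₀ : ∀ y ∈ Set.Ioc (0:ℝ) d, F y ≤ F d₀ + s₀ * (y - d₀))
    (hval₀ : ∑ j, c j * xeq j = F d₀)
    (hs₀ : F d₀ = s₀ * d)
    -- s is a supergradient of F at d, and strong duality: cᵀx* − λ*ᵀb = s·d
    (hsuper : ∀ y ∈ Set.Ioc (0:ℝ) d, F y ≤ F d + s * (y - d))
    (hdual : ∑ j, c j * xstar j - ∑ i, lam i * b i = s * d)
    -- complementary slackness: λ*ᵀ b = λ*ᵀ A x*
    (hcs : ∑ i, lam i * b i = ∑ i, lam i * A.mulVec xstar i) :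
    ∑ j, c j * xeq j ≥ ∑ j, c j * xstar j - ∑ i, lam i * A.mulVec xstar i :=
  equilibrium_value_vs_net_value_general c A b d hd F hFpos xeq xstar lam d₀ hd₀mem s₀ s hsuper₀
    hval₀ hs₀ hsuper hdual hcs
end

section
/- The map n ↦ x(n) from the simplex {n ∈ ℝ^{S×A}_{≥0} : Σ n_{ia} = d} to ℝ^{S×A}_{≥0}, where x(n) is the unique maximizer of Σ_{ia} [n_{ia}·log(x_{ia}) − t_{ia}·x_{ia}] over {x ≥ 0 : Aᵣ x ≤ b}, is continuous. -/
/-!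
The constant vector `ε` is strictly feasible for small `ε > 0`, so every maximizer has objective
value at least `d log ε - (∑ t) ε`. Since `n log x` grows slower than `t x`, this lower bound
traps `X n` in a fixed box and keeps each `n_i log (X n)_i` bounded below, uniformly on the
simplex. By compactness of the box it suffices that every cluster point `z` of `X` at `n₀` equals
`X n₀`. The lower bound forces `z_i > 0` wherever `n₀_i > 0`; the objective is upper
semicontinuous along the converging maximizers, and an admissible competitor for `n₀` is
approximated along a segment towards `ε` by competitors admissible for every `n`, so `z` is a
maximizer for `n₀`, and `z = X n₀` by uniqueness.
-/

open Matrix Filter Topology Real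

namespace Real

theorem mul_log_le_mul_add_mul_max {a d c x : ℝ} (ha : 0 ≤ a) (had : a ≤ d) (hc : 0 < c)
    (hx : 0 ≤ x) : a * log x ≤ c * x + d * max 0 (log (d / c)) := by
  have hcx : 0 ≤ c * x := mul_nonneg hc.le hx
  have hdK : 0 ≤ d * max 0 (log (d / c)) := mul_nonneg (ha.trans had) (le_max_left _ _)
  rcases ha.eq_or_lt with rfl | ha
  · simp only [zero_mul]; positivity
  rcases hx.eq_or_lt with rfl | hx
  · simp only [log_zero, mul_zero]; positivity
  have hd : 0 < d := ha.trans_le had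
  have hlog : log x ≤ c * x / d + log (d / c) := by
    have hsplit : log x = log (c * x / d) + log (d / c) := by
      rw [← log_mul (by positivity) (by positivity)]
      congr 1
      field_simp
    rw [hsplit]
    gcongr
    exact log_le_self (by positivity)
  calc a * log x ≤ a * (c * x / d) + a * max 0 (log (d / c)) := by
        rw [← mul_add]
        exact mul_le_mul_of_nonneg_left (hlog.trans (by gcongr; exact le_max_right _ _)) ha.le
    _ ≤ d * (c * x / d) + d * max 0 (log (d / c)) := by gcongr
    _ = c * x + d * max 0 (log (d / c)) := by field_simp

theorem log_le_max_zero_log {x B : ℝ} (hx : 0 ≤ x) (hxB : x ≤ B) : log x ≤ max 0 (log B) := by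
  rcases hx.eq_or_lt with rfl | hx
  · simp
  · exact (log_le_log hx hxB).trans (le_max_right _ _)

theorem pos_of_tendsto_of_le_mul_log {α : Type*} {l : Filter α} [l.NeBot] {a x : α → ℝ}
    {a₀ x₀ L : ℝ} (ha : Tendsto a l (𝓝 a₀)) (hx : Tendsto x l (𝓝 x₀)) (ha₀ : 0 < a₀)
    (hpos : ∀ᶠ k in l, 0 < a k → 0 < x k) (hL : ∀ᶠ k in l, L ≤ a k * log (x k)) :
    0 < x₀ := by
  have hexp : ∀ᶠ k in l, exp (L / a k) ≤ x k := by
    filter_upwards [ha.eventually (eventually_gt_nhds ha₀), hpos, hL] with k hak hxk hLk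
    rw [← le_log_iff_exp_le (hxk hak), div_le_iff₀' hak]
    exact hLk
  have hlim : Tendsto (fun k => exp (L / a k)) l (𝓝 (exp (L / a₀))) :=
    (continuous_exp.tendsto _).comp (tendsto_const_nhds.div ha ha₀.ne')
  exact (exp_pos _).trans_le (le_of_tendsto_of_tendsto hlim hx hexp)

theorem exists_tendsto_ge_mul_log_sub {α : Type*} {l : Filter α} {a x : α → ℝ}
    {a₀ x₀ c B : ℝ} (hc : 0 ≤ c) (ha : Tendsto a l (𝓝 a₀)) (hx : Tendsto x l (𝓝 x₀))
    (hbd : ∀ᶠ k in l, 0 ≤ a k ∧ 0 ≤ x k ∧ x k ≤ B) (h₀ : x₀ = 0 → a₀ = 0) :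
    ∃ u : α → ℝ, (∀ᶠ k in l, a k * log (x k) - c * x k ≤ u k) ∧
      Tendsto u l (𝓝 (a₀ * log x₀ - c * x₀)) := by
  by_cases hx₀ : x₀ = 0
  · refine ⟨fun k => a k * max 0 (log B), ?_, ?_⟩
    · filter_upwards [hbd] with k ⟨hak, hxk, hxB⟩
      have := mul_le_mul_of_nonneg_left (log_le_max_zero_log hxk hxB) hak
      nlinarith [mul_nonneg hc hxk]
    · simpa [hx₀, h₀ hx₀] using ha.mul_const (max 0 (log B))
  · exact ⟨_, .of_forall fun _ => le_rfl,
      (ha.mul ((continuousAt_log hx₀).tendsto.comp hx)).sub (hx.const_mul c)⟩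

end Real

namespace Matrix

theorem exists_pos_mulVec_const_le {κ ι : Type*} [Finite κ] [Fintype ι] (A : Matrix κ ι ℝ)
    {b : κ → ℝ} (hb : ∀ q, 0 < b q) : ∃ ε > 0, A *ᵥ (fun _ => ε) ≤ b := by
  have hlim : Tendsto (fun ε : ℝ => A *ᵥ fun _ => ε) (𝓝 0) (𝓝 0) := by
    have : Continuous fun ε : ℝ => A *ᵥ fun _ => ε :=
      continuous_const.matrix_mulVec (continuous_pi fun _ => continuous_id)
    simpa only [← Pi.zero_def, mulVec_zero] using this.tendsto 0
  have hev : ∀ᶠ ε in 𝓝 (0 : ℝ), A *ᵥ (fun _ => ε) ≤ b := eventually_all.2 fun q =>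
    ((tendsto_pi_nhds.1 hlim q).eventually (eventually_lt_nhds (hb q))).mono fun _ h => h.le
  obtain ⟨ε, hεb, hε⟩ := ((hev.filter_mono nhdsWithin_le_nhds).and
    (self_mem_nhdsWithin : Set.Ioi (0 : ℝ) ∈ 𝓝[>] 0)).exists
  exact ⟨ε, hε, hεb⟩

end Matrix

namespace AnonymousGame

section LogUtility

variable {ι : Type*} [Fintype ι]

noncomputable def logUtility (t n x : ι → ℝ) : ℝ :=
  ∑ i, (n i * log (x i) - t i * x i)

theorem logUtility_const (t n : ι → ℝ) (ε : ℝ) :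
    logUtility t n (fun _ => ε) = (∑ i, n i) * log ε - (∑ i, t i) * ε := by
  simp only [logUtility, Finset.sum_sub_distrib, Finset.sum_mul]

theorem continuous_logUtility_left (t x : ι → ℝ) : Continuous fun n => logUtility t n x := by
  unfold logUtility
  fun_prop

theorem continuousAt_logUtility {t n y : ι → ℝ} (hy : ∀ i, n i ≠ 0 → y i ≠ 0) :
    ContinuousAt (logUtility t n) y := by
  have hterm : ∀ i, ContinuousAt (fun x : ι → ℝ => n i * log (x i) - t i * x i) y := by
    intro i
    have hcoord : ContinuousAt (fun x : ι → ℝ => x i) y := (continuous_apply i).continuousAt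
    by_cases hn : n i = 0
    · simpa only [hn, zero_mul, zero_sub] using (hcoord.const_mul (t i)).fun_neg
    · exact ((hcoord.log (hy i hn)).const_mul (n i)).sub (hcoord.const_mul (t i))
  exact tendsto_finsetSum _ fun i _ => hterm i

theorem exists_bounds_of_le_logUtility {t : ι → ℝ} (ht : ∀ i, 0 < t i) (d C : ℝ) :
    ∃ (B : ι → ℝ) (L : ℝ), ∀ n x : ι → ℝ, (∀ i, n i ∈ Set.Icc 0 d) → 0 ≤ x →
      C ≤ logUtility t n x → x ≤ B ∧ ∀ j, L ≤ n j * log (x j) := by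
  set K : ι → ℝ := fun i => d * max 0 (log (d / (t i / 2)))
  refine ⟨fun j => 2 * (∑ i, K i - C) / t j, C - ∑ i, K i,
    fun n x hn hx hC => ⟨fun j => ?_, fun j => ?_⟩⟩
  · have hterm : ∀ i, n i * log (x i) - t i * x i ≤ K i - t i / 2 * x i := fun i => by
      simp only [K]
      linarith [mul_log_le_mul_add_mul_max (hn i).1 (hn i).2 (half_pos (ht i)) (hx i)]
    have hcost : t j / 2 * x j ≤ ∑ i, t i / 2 * x i :=
      Finset.single_le_sum (fun i _ => mul_nonneg (half_pos (ht i)).le (hx i)) (Finset.mem_univ j)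
    have : C ≤ ∑ i, K i - ∑ i, t i / 2 * x i :=
      calc C ≤ logUtility t n x := hC
        _ ≤ ∑ i, (K i - t i / 2 * x i) := Finset.sum_le_sum fun i _ => hterm i
        _ = ∑ i, K i - ∑ i, t i / 2 * x i := Finset.sum_sub_distrib ..
    rw [le_div_iff₀ (ht j)]
    linarith
  · classical
    have hK : ∀ i, 0 ≤ K i := fun i => mul_nonneg ((hn i).1.trans (hn i).2) (le_max_left _ _)
    have hterm : ∀ i, n i * log (x i) - t i * x i ≤ K i := fun i => by
      simp only [K]
      linarith [mul_log_le_mul_add_mul_max (hn i).1 (hn i).2 (half_pos (ht i)) (hx i),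
        mul_nonneg (ht i).le (hx i)]
    have : C ≤ n j * log (x j) + ∑ i, K i :=
      calc C ≤ logUtility t n x := hC
        _ = (n j * log (x j) - t j * x j) +
            ∑ i ∈ Finset.univ.erase j, (n i * log (x i) - t i * x i) :=
          (Finset.add_sum_erase _ _ (Finset.mem_univ j)).symm
        _ ≤ n j * log (x j) + ∑ i ∈ Finset.univ.erase j, K i := by
          gcongr with i
          · linarith [mul_nonneg (ht j).le (hx j)]
          · exact hterm i
        _ ≤ n j * log (x j) + ∑ i, K i := add_le_add_right
          (Finset.sum_le_sum_of_subset_of_nonneg (Finset.erase_subset _ _) fun i _ _ => hK i) _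
    linarith

theorem logUtility_le_of_tendsto {α : Type*} {l : Filter α} [l.NeBot] {t : ι → ℝ}
    {m x : α → ι → ℝ} {n₀ z w B : ι → ℝ} (ht : 0 ≤ t) (hm : Tendsto m l (𝓝 n₀))
    (hx : Tendsto x l (𝓝 z)) (hbd : ∀ᶠ k in l, 0 ≤ m k ∧ 0 ≤ x k ∧ x k ≤ B)
    (hz : ∀ i, z i = 0 → n₀ i = 0)
    (hw : ∀ᶠ k in l, logUtility t (m k) w ≤ logUtility t (m k) (x k)) :
    logUtility t n₀ w ≤ logUtility t n₀ z := by
  choose u hu hlim using fun i => exists_tendsto_ge_mul_log_sub (ht i)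
    (tendsto_pi_nhds.1 hm i) (tendsto_pi_nhds.1 hx i)
    (hbd.mono fun k h => ⟨h.1 i, h.2.1 i, h.2.2 i⟩) (hz i)
  refine le_of_tendsto_of_tendsto (((continuous_logUtility_left t w).tendsto n₀).comp hm)
    (tendsto_finsetSum _ fun i _ => hlim i) ?_
  filter_upwards [hw, eventually_all.2 hu] with k hwk huk
  exact hwk.trans (Finset.sum_le_sum fun i _ => huk i)

theorem logUtility_le_of_forall_pos {P : Set (ι → ℝ)} (hP : Convex ℝ P) {t n w₀ y : ι → ℝ}
    {M : ℝ} (hw₀ : w₀ ∈ P) (hw₀pos : ∀ i, 0 < w₀ i) (hy : y ∈ P) (hy0 : 0 ≤ y)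
    (hyn : ∀ i, n i ≠ 0 → y i ≠ 0) (hM : ∀ w ∈ P, (∀ i, 0 < w i) → logUtility t n w ≤ M) :
    logUtility t n y ≤ M := by
  have hseg : Tendsto (fun θ : ℝ => y + θ • (w₀ - y)) (𝓝[>] 0) (𝓝 y) := by
    have : Continuous fun θ : ℝ => y + θ • (w₀ - y) := by fun_prop
    simpa using (this.tendsto 0).mono_left nhdsWithin_le_nhds
  refine le_of_tendsto ((continuousAt_logUtility hyn).tendsto.comp hseg) ?_
  filter_upwards [Ioo_mem_nhdsGT one_pos] with θ ⟨hθ0, hθ1⟩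
  refine hM _ (hP.add_smul_sub_mem hy hw₀ ⟨hθ0.le, hθ1.le⟩) fun i => ?_
  have : y i + θ * (w₀ i - y i) = (1 - θ) * y i + θ * w₀ i := by ring
  simp only [Pi.add_apply, Pi.smul_apply, Pi.sub_apply, smul_eq_mul, this]
  exact add_pos_of_nonneg_of_pos (mul_nonneg (by linarith) (hy0 i)) (mul_pos hθ0 (hw₀pos i))

end LogUtility

section Admissible

variable {ι κ : Type*} [Fintype ι]

/-- Positivity is required only where `n i > 0`: elsewhere `n i * log (x i)` vanishes, which
encodes the convention `0 * log 0 = 0`. -/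
def Admissible (Ar : Matrix κ ι ℝ) (b : κ → ℝ) (n x : ι → ℝ) : Prop :=
  0 ≤ x ∧ Ar *ᵥ x ≤ b ∧ ∀ i, 0 < n i → 0 < x i

theorem admissible_and_isMaxOn_of_tendsto {α : Type*} {l : Filter α} [l.NeBot] {t : ι → ℝ}
    {Ar : Matrix κ ι ℝ} {b : κ → ℝ} {w₀ : ι → ℝ} (ht : 0 ≤ t) (hw₀ : ∀ i, 0 < w₀ i)
    (hw₀b : Ar *ᵥ w₀ ≤ b) {m x : α → ι → ℝ} {n₀ z B : ι → ℝ} {L : ℝ}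
    (hm : Tendsto m l (𝓝 n₀)) (hx : Tendsto x l (𝓝 z))
    (hmax : ∀ᶠ k in l, 0 ≤ m k ∧ Admissible Ar b (m k) (x k) ∧
      IsMaxOn (logUtility t (m k)) {y | Admissible Ar b (m k) y} (x k))
    (hbd : ∀ᶠ k in l, x k ≤ B ∧ ∀ j, L ≤ m k j * log (x k j)) :
    Admissible Ar b n₀ z ∧ IsMaxOn (logUtility t n₀) {y | Admissible Ar b n₀ y} z := by
  set P : Set (ι → ℝ) := {y | 0 ≤ y ∧ Ar *ᵥ y ≤ b}
  have hPclosed : IsClosed P := (isClosed_le continuous_const continuous_id).inter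
    (isClosed_le (continuous_const.matrix_mulVec continuous_id) continuous_const)
  have hPconvex : Convex ℝ P :=
    (convex_Ici 0).inter ((convex_Iic b).linear_preimage (Matrix.mulVecLin Ar))
  have hn₀ : 0 ≤ n₀ := ge_of_tendsto hm (hmax.mono fun _ h => h.1)
  have hzP : z ∈ P := hPclosed.mem_of_tendsto hx (hmax.mono fun _ h => ⟨h.2.1.1, h.2.1.2.1⟩)
  have hzpos : ∀ i, 0 < n₀ i → 0 < z i := fun i hi =>
    pos_of_tendsto_of_le_mul_log (tendsto_pi_nhds.1 hm i) (tendsto_pi_nhds.1 hx i) hi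
      (hmax.mono fun _ h => h.2.1.2.2 i) (hbd.mono fun _ h => h.2 i)
  refine ⟨⟨hzP.1, hzP.2, hzpos⟩, isMaxOn_iff.2 fun y hy => ?_⟩
  refine logUtility_le_of_forall_pos hPconvex ⟨fun i => (hw₀ i).le, hw₀b⟩ hw₀ ⟨hy.1, hy.2.1⟩
    hy.1 (fun i hi => (hy.2.2 i ((hn₀ i).lt_of_ne' hi)).ne') fun w hw hwpos => ?_
  refine logUtility_le_of_tendsto ht hm hx
    ((hmax.and hbd).mono fun _ h => ⟨h.1.1, h.1.2.1.1, h.2.1⟩) (fun i hzi => ?_)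
    (hmax.mono fun _ h => isMaxOn_iff.1 h.2.2 w ⟨hw.1, hw.2, fun i _ => hwpos i⟩)
  by_contra hi
  exact (hzpos i ((hn₀ i).lt_of_ne' hi)).ne' hzi

end Admissible

end AnonymousGame

open AnonymousGame

theorem anonymous_game_maximizer_continuous_general
    {ι : Type*} [Fintype ι] {I : ℕ}
    (t : ι → ℝ) (Ar : Matrix (Fin I) ι ℝ) (b : Fin I → ℝ) (d : ℝ)
    (ht : ∀ i, 0 < t i) (hb : ∀ q, 0 < b q)
    (X : (ι → ℝ) → (ι → ℝ))
    (hX : ∀ n : ι → ℝ, (∀ i, 0 ≤ n i) → (∑ i, n i = d) →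
      -- X n is a feasible maximizer
      ((∀ i, 0 ≤ X n i) ∧ (∀ q, Ar.mulVec (X n) q ≤ b q) ∧
        (∀ i, 0 < n i → 0 < X n i) ∧
        (∀ y : ι → ℝ, (∀ i, 0 ≤ y i) → (∀ q, Ar.mulVec y q ≤ b q) →
          (∀ i, 0 < n i → 0 < y i) →
          ∑ i, (n i * Real.log (y i) - t i * y i) ≤
            ∑ i, (n i * Real.log (X n i) - t i * X n i))) ∧
      -- and it is the unique such maximizer
      (∀ y : ι → ℝ, (∀ i, 0 ≤ y i) → (∀ q, Ar.mulVec y q ≤ b q) →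
        (∀ i, 0 < n i → 0 < y i) →
        (∀ z : ι → ℝ, (∀ i, 0 ≤ z i) → (∀ q, Ar.mulVec z q ≤ b q) →
          (∀ i, 0 < n i → 0 < z i) →
          ∑ i, (n i * Real.log (z i) - t i * z i) ≤
            ∑ i, (n i * Real.log (y i) - t i * y i)) →
        y = X n)) :
    ContinuousOn X {n : ι → ℝ | (∀ i, 0 ≤ n i) ∧ ∑ i, n i = d} := by
  set S := {n : ι → ℝ | (∀ i, 0 ≤ n i) ∧ ∑ i, n i = d}
  have hmaxX : ∀ n ∈ S, Admissible Ar b n (X n) ∧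
      IsMaxOn (logUtility t n) {y | Admissible Ar b n y} (X n) := fun n hn =>
    have h := (hX n hn.1 hn.2).1
    ⟨⟨h.1, h.2.1, h.2.2.1⟩, isMaxOn_iff.2 fun y hy => h.2.2.2 y hy.1 hy.2.1 hy.2.2⟩
  obtain ⟨ε, hε, hεb⟩ := Ar.exists_pos_mulVec_const_le hb
  obtain ⟨B, L, hBL⟩ := exists_bounds_of_le_logUtility ht d (d * log ε - (∑ i, t i) * ε)
  have hbd : ∀ n ∈ S, X n ≤ B ∧ ∀ j, L ≤ n j * log (X n j) := fun n hn =>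
    hBL n (X n) (fun i => ⟨hn.1 i, hn.2 ▸ Finset.single_le_sum (fun j _ => hn.1 j)
      (Finset.mem_univ i)⟩) (hmaxX n hn).1.1 (by
        rw [← hn.2, ← logUtility_const]
        exact isMaxOn_iff.1 (hmaxX n hn).2 _ ⟨fun _ => hε.le, hεb, fun _ _ => hε⟩)
  intro n₀ hn₀
  refine (isCompact_Icc (a := 0) (b := B)).tendsto_nhds_of_unique_mapClusterPt
    (eventually_mem_nhdsWithin.mono fun n hn => ⟨(hmaxX n hn).1.1, (hbd n hn).1⟩)
    fun z _ hz => ?_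
  have : (comap X (𝓝 z) ⊓ 𝓝[S] n₀).NeBot := by
    rwa [← map_neBot_iff X, Filter.push_pull']
  have hS : ∀ᶠ n in comap X (𝓝 z) ⊓ 𝓝[S] n₀, n ∈ S :=
    eventually_mem_nhdsWithin.filter_mono inf_le_right
  obtain ⟨⟨hz0, hzb, hzpos⟩, hzmax⟩ := admissible_and_isMaxOn_of_tendsto (fun i => (ht i).le)
    (fun _ => hε) hεb (tendsto_id'.2 (inf_le_right.trans nhdsWithin_le_nhds))
    (tendsto_comap.mono_left inf_le_left) (hS.mono fun n hn => ⟨hn.1, hmaxX n hn⟩)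
    (hS.mono hbd)
  exact (hX n₀ hn₀.1 hn₀.2).2 z hz0 hzb hzpos fun y hy0 hyb hypos =>
    isMaxOn_iff.1 hzmax y ⟨hy0, hyb, hypos⟩

/-- The map `n ↦ x(n)`, sending a player-mass distribution on the simplex to the unique
maximizer of `Σ [n·log x − t·x]` over `{x ≥ 0 : Aᵣ x ≤ b}` (with `x > 0` wherever
`n > 0`, encoding the convention `0·log x = 0`), is continuous on the simplex. -/
theorem anonymous_game_maximizer_continuous
    {ι : Type*} [Fintype ι] {I : ℕ}
    (t : ι → ℝ) (Ar : Matrix (Fin I) ι ℝ) (b : Fin I → ℝ) (d : ℝ)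
    (ht : ∀ i, 0 < t i) (hAr : ∀ q i, 0 ≤ Ar q i) (hb : ∀ q, 0 < b q) (hd : 0 < d)
    (X : (ι → ℝ) → (ι → ℝ))
    (hX : ∀ n : ι → ℝ, (∀ i, 0 ≤ n i) → (∑ i, n i = d) →
      -- X n is a feasible maximizer
      ((∀ i, 0 ≤ X n i) ∧ (∀ q, Ar.mulVec (X n) q ≤ b q) ∧
        (∀ i, 0 < n i → 0 < X n i) ∧
        (∀ y : ι → ℝ, (∀ i, 0 ≤ y i) → (∀ q, Ar.mulVec y q ≤ b q) →
          (∀ i, 0 < n i → 0 < y i) →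
          ∑ i, (n i * Real.log (y i) - t i * y i) ≤
            ∑ i, (n i * Real.log (X n i) - t i * X n i))) ∧
      -- and it is the unique such maximizer
      (∀ y : ι → ℝ, (∀ i, 0 ≤ y i) → (∀ q, Ar.mulVec y q ≤ b q) →
        (∀ i, 0 < n i → 0 < y i) →
        (∀ z : ι → ℝ, (∀ i, 0 ≤ z i) → (∀ q, Ar.mulVec z q ≤ b q) →
          (∀ i, 0 < n i → 0 < z i) →
          ∑ i, (n i * Real.log (z i) - t i * z i) ≤
            ∑ i, (n i * Real.log (y i) - t i * y i)) →
        y = X n)) :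
    ContinuousOn X {n : ι → ℝ | (∀ i, 0 ≤ n i) ∧ ∑ i, n i = d} :=
  anonymous_game_maximizer_continuous_general t Ar b d ht hb X hX
end

section
/- Under the Feasibility assumption (there exist x_l ≥ 0, l = 1,…,L, with Σ_l A_l x_l ≤ b, H_l x_l = 0, and c_l^T x_l > 0 for all l), the potential maximization problem: maximize Σ_l [d_l·log(c_l^T x_l) − t_l^T x_l] subject to Σ_l A_l x_l ≤ b, H_l x_l = 0, x_l ≥ 0, attains its maximum at some feasible point with c_l^T x_l > 0 for every l. -/
/-!
Each type's term `d log (c ⬝ᵥ x) - t ⬝ᵥ x` is at most `β - t ⬝ᵥ x / 2` for a constant `β`, since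
`c ⬝ᵥ x ≤ R * t ⬝ᵥ x` when `t > 0` and `log r ≤ log a + r / a - 1`. So on the superlevel set of the
potential through a feasible point every cost `t l ⬝ᵥ x l` is bounded above and every reward
`c l ⬝ᵥ x l` is bounded below by a positive constant. This cuts out a compact part of the feasible
region on which the potential is continuous, and its maximizer there is a global one.
-/

open Matrix Real Set

theorem IsCompact.exists_isMaxOn_of_forall_le_mem {X α : Type*} [TopologicalSpace X]
    [LinearOrder α] [TopologicalSpace α] [ClosedIciTopology α] {S K : Set X} {f : X → α}
    {x₀ : X} (hK : IsCompact K) (hf : ContinuousOn f K) (hx₀ : x₀ ∈ K)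
    (hsuper : ∀ y ∈ S, f x₀ ≤ f y → y ∈ K) : ∃ x ∈ K, IsMaxOn f S x := by
  obtain ⟨x, hxK, hmax⟩ := hK.exists_isMaxOn ⟨x₀, hx₀⟩ hf
  refine ⟨x, hxK, fun y hyS => ?_⟩
  rcases le_or_gt (f x₀) (f y) with hy | hy
  · exact hmax (hsuper y hyS hy)
  · exact hy.le.trans (hmax hx₀)

section SingleType

variable {κ : Type*} [Fintype κ] {t : κ → ℝ}

theorem exists_dotProduct_le_mul_dotProduct (c : κ → ℝ) (ht : ∀ j, 0 < t j) :
    ∃ R > 0, ∀ x, 0 ≤ x → c ⬝ᵥ x ≤ R * t ⬝ᵥ x := by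
  have hterm : ∀ j, 0 ≤ |c j| / t j := fun j => div_nonneg (abs_nonneg _) (ht j).le
  set R := 1 + ∑ j, |c j| / t j
  have hR : 0 < R := add_pos_of_pos_of_nonneg one_pos (Finset.sum_nonneg fun j _ => hterm j)
  refine ⟨R, hR, fun x hx => ?_⟩
  have hcR : c ≤ R • t := fun j => calc
    c j ≤ |c j| / t j * t j := by rw [div_mul_cancel₀ _ (ht j).ne']; exact le_abs_self _
    _ ≤ R * t j := by
      gcongr
      · exact (ht j).le
      · exact (Finset.single_le_sum (fun i _ => hterm i) (Finset.mem_univ j)).trans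
          (le_add_of_nonneg_left zero_le_one)
  simpa [smul_dotProduct] using dotProduct_le_dotProduct_of_nonneg_right hcR hx

theorem exists_mul_log_sub_le (c : κ → ℝ) (ht : ∀ j, 0 < t j) {d : ℝ} (hd : 0 < d) :
    ∃ β, ∀ x, 0 ≤ x → 0 < c ⬝ᵥ x → d * log (c ⬝ᵥ x) - t ⬝ᵥ x ≤ β - t ⬝ᵥ x / 2 := by
  obtain ⟨R, hR, hcR⟩ := exists_dotProduct_le_mul_dotProduct c ht
  have ha : 0 < 2 * d * R := by positivity
  -- `a = 2 d R` makes the linear part of `d (log a + r / a - 1)` at most `t ⬝ᵥ x / 2`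
  refine ⟨d * log (2 * d * R) - d, fun x hx hcx => ?_⟩
  have hlog : log (c ⬝ᵥ x) ≤ log (2 * d * R) + c ⬝ᵥ x / (2 * d * R) - 1 := by
    have := log_le_sub_one_of_pos (div_pos hcx ha)
    rw [log_div hcx.ne' ha.ne'] at this
    linarith
  have hcx' : d * (c ⬝ᵥ x / (2 * d * R)) ≤ t ⬝ᵥ x / 2 := by
    rw [mul_div_assoc', div_le_iff₀ ha]
    nlinarith [hcR x hx]
  nlinarith [mul_le_mul_of_nonneg_left hlog hd.le]

end SingleType

section Potential

variable {ι κ : Type*} [Fintype κ]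

theorem single_le_dotProduct_of_nonneg {t x : κ → ℝ} (ht : 0 ≤ t) (hx : 0 ≤ x) (j : κ) :
    t j * x j ≤ t ⬝ᵥ x :=
  Finset.single_le_sum (fun i _ => mul_nonneg (ht i) (hx i)) (Finset.mem_univ j)

theorem isCompact_inter_setOf_dotProduct_le {t : ι → κ → ℝ} (ht : ∀ l j, 0 < t l j)
    {S : Set (ι → κ → ℝ)} (hS : IsClosed S) (hS_nonneg : ∀ x ∈ S, 0 ≤ x) (M : ℝ) :
    IsCompact (S ∩ {x | ∀ l, t l ⬝ᵥ x l ≤ M}) := by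
  refine (isCompact_Icc (a := 0) (b := fun l j => M / t l j)).of_isClosed_subset ?_
    fun x ⟨hxS, hxM⟩ => ?_
  · rw [ofPred_forall]
    exact hS.inter (isClosed_iInter fun l => isClosed_le (by fun_prop) continuous_const)
  · refine ⟨hS_nonneg x hxS, fun l j => (le_div_iff₀ (ht l j)).2 ?_⟩
    rw [mul_comm]
    exact (single_le_dotProduct_of_nonneg (fun j => (ht l j).le) (hS_nonneg x hxS l) j).trans
      (hxM l)

variable [Fintype ι]

def feasibleSet {m : Type*} {n : ι → Type*} (A : ι → Matrix m κ ℝ)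
    (H : (l : ι) → Matrix (n l) κ ℝ) (b : m → ℝ) : Set (ι → κ → ℝ) :=
  {x | 0 ≤ x ∧ (∀ i, ∑ l, (A l).mulVec (x l) i ≤ b i) ∧ ∀ l, (H l).mulVec (x l) = 0}

theorem isClosed_feasibleSet {m : Type*} {n : ι → Type*} (A : ι → Matrix m κ ℝ)
    (H : (l : ι) → Matrix (n l) κ ℝ) (b : m → ℝ) : IsClosed (feasibleSet A H b) := by
  simp only [feasibleSet, ofPred_and, ofPred_forall]
  exact (isClosed_le continuous_const continuous_id).inter
    ((isClosed_iInter fun i => isClosed_le (by fun_prop) continuous_const).inter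
      (isClosed_iInter fun l => isClosed_eq (by fun_prop) continuous_const))

variable (c t : ι → κ → ℝ) (d : ι → ℝ)

noncomputable def potential (x : ι → κ → ℝ) : ℝ :=
  ∑ l, (d l * log (c l ⬝ᵥ x l) - t l ⬝ᵥ x l)

variable {c t d}

theorem sub_le_sum_sub_potential {β : ι → ℝ}
    (hβ : ∀ l x, 0 ≤ x → 0 < c l ⬝ᵥ x → d l * log (c l ⬝ᵥ x) - t l ⬝ᵥ x ≤ β l - t l ⬝ᵥ x / 2)
    (ht : ∀ l j, 0 < t l j) {y : ι → κ → ℝ} (hy : 0 ≤ y) (hyc : ∀ l, 0 < c l ⬝ᵥ y l) (l : ι) :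
    β l - (d l * log (c l ⬝ᵥ y l) - t l ⬝ᵥ y l) ≤ ∑ l, β l - potential c t d y := by
  have hdeficit : ∀ l, t l ⬝ᵥ y l / 2 ≤ β l - (d l * log (c l ⬝ᵥ y l) - t l ⬝ᵥ y l) :=
    fun l => by linarith [hβ l (y l) (hy l) (hyc l)]
  have hT : ∀ l, 0 ≤ t l ⬝ᵥ y l / 2 := fun l =>
    div_nonneg (dotProduct_nonneg_of_nonneg (fun j => (ht l j).le) (hy l)) zero_le_two
  rw [potential, ← Finset.sum_sub_distrib]
  exact Finset.single_le_sum (fun l _ => (hT l).trans (hdeficit l)) (Finset.mem_univ l)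

theorem exists_isMaxOn_potential (hd : ∀ l, 0 < d l) (ht : ∀ l j, 0 < t l j)
    {S : Set (ι → κ → ℝ)} (hS : IsClosed S) (hS_nonneg : ∀ x ∈ S, 0 ≤ x)
    (hne : (S ∩ {x | ∀ l, 0 < c l ⬝ᵥ x l}).Nonempty) :
    ∃ x ∈ S ∩ {x | ∀ l, 0 < c l ⬝ᵥ x l},
      IsMaxOn (potential c t d) (S ∩ {x | ∀ l, 0 < c l ⬝ᵥ x l}) x := by
  choose β hβ using fun l => exists_mul_log_sub_le (c l) (ht l) (hd l)
  obtain ⟨x₀, hx₀S, hx₀c⟩ := hne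
  set g := ∑ l, β l - potential c t d x₀
  set K := S ∩ {x | ∀ l, t l ⬝ᵥ x l ≤ 2 * g} ∩ {x | ∀ l, exp ((β l - g) / d l) ≤ c l ⬝ᵥ x l}
  have hK : IsCompact K :=
    (isCompact_inter_setOf_dotProduct_le ht hS hS_nonneg _).inter_right <| by
      rw [ofPred_forall]
      exact isClosed_iInter fun l => isClosed_le continuous_const (by fun_prop)
  have hKc : ∀ x ∈ K, ∀ l, 0 < c l ⬝ᵥ x l := fun x hx l => (exp_pos _).trans_le (hx.2 l)
  have hsuper : ∀ y ∈ S ∩ {x | ∀ l, 0 < c l ⬝ᵥ x l},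
      potential c t d x₀ ≤ potential c t d y → y ∈ K := by
    rintro y ⟨hyS, hyc⟩ hy
    have hy0 : ∀ l, 0 ≤ y l := hS_nonneg y hyS
    have hdef := sub_le_sum_sub_potential hβ ht (hS_nonneg y hyS) hyc
    refine ⟨⟨hyS, fun l => ?_⟩, fun l => ?_⟩
    · linarith [hβ l (y l) (hy0 l) (hyc l), hdef l]
    · rw [← le_log_iff_exp_le (hyc l), div_le_iff₀' (hd l)]
      linarith [hdef l, dotProduct_nonneg_of_nonneg (fun j => (ht l j).le) (hy0 l)]
  obtain ⟨x, hxK, hmax⟩ := hK.exists_isMaxOn_of_forall_le_mem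
    (by unfold potential; fun_prop (disch := exact fun x hx => (hKc x hx _).ne'))
    (hsuper x₀ ⟨hx₀S, hx₀c⟩ le_rfl) hsuper
  exact ⟨x, ⟨hxK.1.1, hKc x hxK⟩, hmax⟩

end Potential

theorem potential_attains_maximum_general
    {L J I : ℕ} {K : Fin L → ℕ}
    (c t : Fin L → Fin J → ℝ) (A : Fin L → Matrix (Fin I) (Fin J) ℝ)
    (H : (l : Fin L) → Matrix (Fin (K l)) (Fin J) ℝ)
    (b : Fin I → ℝ) (d : Fin L → ℝ)
    (hd : ∀ l, 0 < d l) (ht : ∀ l j, 0 < t l j)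
    -- Feasibility assumption
    (hfeas : ∃ x : Fin L → Fin J → ℝ, (∀ l j, 0 ≤ x l j) ∧
      (∀ i, ∑ l, (A l).mulVec (x l) i ≤ b i) ∧
      (∀ l, (H l).mulVec (x l) = 0) ∧
      (∀ l, 0 < ∑ j, c l j * x l j)) :
    ∃ x : Fin L → Fin J → ℝ,
      (∀ l j, 0 ≤ x l j) ∧
      (∀ i, ∑ l, (A l).mulVec (x l) i ≤ b i) ∧
      (∀ l, (H l).mulVec (x l) = 0) ∧
      (∀ l, 0 < ∑ j, c l j * x l j) ∧
      (∀ y : Fin L → Fin J → ℝ, (∀ l j, 0 ≤ y l j) →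
        (∀ i, ∑ l, (A l).mulVec (y l) i ≤ b i) →
        (∀ l, (H l).mulVec (y l) = 0) →
        (∀ l, 0 < ∑ j, c l j * y l j) →
        ∑ l, (d l * Real.log (∑ j, c l j * y l j) - ∑ j, t l j * y l j) ≤
          ∑ l, (d l * Real.log (∑ j, c l j * x l j) - ∑ j, t l j * x l j)) := by
  obtain ⟨x₀, hx₀, hx₀A, hx₀H, hx₀c⟩ := hfeas
  obtain ⟨x, ⟨⟨hx, hxA, hxH⟩, hxc⟩, hmax⟩ :=
    exists_isMaxOn_potential (c := c) hd ht (isClosed_feasibleSet A H b) (fun x hx => hx.1)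
      ⟨x₀, ⟨hx₀, hx₀A, hx₀H⟩, hx₀c⟩
  exact ⟨x, hx, hxA, hxH, hxc, fun y hy hyA hyH hyc => hmax ⟨⟨hy, hyA, hyH⟩, hyc⟩⟩

/-- Under the Feasibility assumption, the potential maximization problem attains its
maximum at a feasible point with positive reward for every type. -/
theorem potential_attains_maximum
    {L J I : ℕ} {K : Fin L → ℕ}
    (c t : Fin L → Fin J → ℝ) (A : Fin L → Matrix (Fin I) (Fin J) ℝ)
    (H : (l : Fin L) → Matrix (Fin (K l)) (Fin J) ℝ)
    (b : Fin I → ℝ) (d : Fin L → ℝ)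
    (hd : ∀ l, 0 < d l) (ht : ∀ l j, 0 < t l j) (hA : ∀ l i j, 0 ≤ A l i j)
    (hb : ∀ i, 0 < b i)
    -- Feasibility assumption
    (hfeas : ∃ x : Fin L → Fin J → ℝ, (∀ l j, 0 ≤ x l j) ∧
      (∀ i, ∑ l, (A l).mulVec (x l) i ≤ b i) ∧
      (∀ l, (H l).mulVec (x l) = 0) ∧
      (∀ l, 0 < ∑ j, c l j * x l j)) :
    ∃ x : Fin L → Fin J → ℝ,
      (∀ l j, 0 ≤ x l j) ∧
      (∀ i, ∑ l, (A l).mulVec (x l) i ≤ b i) ∧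
      (∀ l, (H l).mulVec (x l) = 0) ∧
      (∀ l, 0 < ∑ j, c l j * x l j) ∧
      (∀ y : Fin L → Fin J → ℝ, (∀ l j, 0 ≤ y l j) →
        (∀ i, ∑ l, (A l).mulVec (y l) i ≤ b i) →
        (∀ l, (H l).mulVec (y l) = 0) →
        (∀ l, 0 < ∑ j, c l j * y l j) →
        ∑ l, (d l * Real.log (∑ j, c l j * y l j) - ∑ j, t l j * y l j) ≤
          ∑ l, (d l * Real.log (∑ j, c l j * x l j) - ∑ j, t l j * x l j)) :=
  potential_attains_maximum_general c t A H b d hd ht hfeas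
end
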